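/- (Completeness of overdeletion.) Let Π be a Datalog program, E a dataset, I = mat(Π, E), and E⁻′ ⊆ E. Define D_0 = ∅, N_0 = E⁻′, Δ⁻_k = N_k \ D_k, N_{k+1} = ⋃_{r∈Π} ( r[(I \ D_k) ∸ Δ⁻_k] ∩ ((I \ D_k) \ Δ⁻_k) ), D_{k+1} = D_k ∪ Δ⁻_k, and D = ⋃_k D_k. Then mat(Π, E) \ mat(Π, E \ E⁻′) ⊆ D; equivalently, I \ D ⊆ mat(Π, E \ E⁻′): every fact that loses all of its derivations after deleting E⁻′ is overdeleted. -/
import Mathlib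


namespace Datalog

/-- An atom `P(t₁,…,tₖ)`: a predicate symbol applied to a list of terms, where
`Sum.inl v` denotes the variable `v` and `Sum.inr c` denotes the constant `c`. -/
structure Atom where
  pred : ℕ
  args : List (ℕ ⊕ ℕ)
deriving DecidableEq

/-- A fact: a variable-free atom, i.e. a predicate applied to constants only. -/
structure Fact where
  pred : ℕ
  args : List ℕ
deriving DecidableEq

/-- Applying a substitution `σ` (a map from variables to constants) to an atom. -/
def Atom.subst (A : Atom) (σ : ℕ → ℕ) : Fact :=
  ⟨A.pred, A.args.map (Sum.elim σ id)⟩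

/-- The set of variables occurring in an atom. -/
def Atom.vars (A : Atom) : Set ℕ := { v | Sum.inl v ∈ A.args }

/-- A Datalog rule: a head atom and a finite set of body atoms, which is safe:
every variable of the head occurs in some body atom. -/
structure Rule where
  head : Atom
  body : Finset Atom
  safe : ∀ v ∈ head.vars, ∃ B ∈ body, v ∈ B.vars

/-- `r[I] = { h(rσ) | b(rσ) ⊆ I }`. -/
def Rule.eval (r : Rule) (I : Set Fact) : Set Fact :=
  { f | ∃ σ : ℕ → ℕ, (∀ B ∈ r.body, B.subst σ ∈ I) ∧ f = r.head.subst σ }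

/-- `r[I ∸ Δ] = { h(rσ) | b(rσ) ⊆ I and b(rσ) ∩ Δ ≠ ∅ }`. -/
def Rule.evalDelta (r : Rule) (I Δ : Set Fact) : Set Fact :=
  { f | ∃ σ : ℕ → ℕ, (∀ B ∈ r.body, B.subst σ ∈ I) ∧
        (∃ B ∈ r.body, B.subst σ ∈ Δ) ∧ f = r.head.subst σ }

/-- `Π[I] = ⋃_{r ∈ Π} r[I]`. -/
def progEval (P : Set Rule) (I : Set Fact) : Set Fact := ⋃ r ∈ P, r.eval I

/-- `Π[I ∸ Δ] = ⋃_{r ∈ Π} r[I ∸ Δ]`. -/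
def progEvalDelta (P : Set Rule) (I Δ : Set Fact) : Set Fact := ⋃ r ∈ P, r.evalDelta I Δ

/-- `I_0 = E`, `I_{i+1} = I_i ∪ Π[I_i]`. -/
def matSeq (P : Set Rule) (E : Set Fact) : ℕ → Set Fact
  | 0 => E
  | n + 1 => matSeq P E n ∪ progEval P (matSeq P E n)

/-- The materialisation `mat(Π, E) = ⋃_{i ≥ 0} I_i`. -/
def mat (P : Set Rule) (E : Set Fact) : Set Fact := ⋃ n, matSeq P E n

/-- The overdeletion sequence `(D_k, N_k)`: `D_0 = ∅`, `N_0 = E⁻′`,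
`Δ⁻_k = N_k \ D_k`,
`N_{k+1} = ⋃_{r∈Π} (r[(I \ D_k) ∸ Δ⁻_k] ∩ ((I \ D_k) \ Δ⁻_k))`,
`D_{k+1} = D_k ∪ Δ⁻_k`. -/
def delSeq (P : Set Rule) (I Em : Set Fact) : ℕ → Set Fact × Set Fact
  | 0 => (∅, Em)
  | k + 1 =>
      let s := delSeq P I Em k
      let Δ := s.2 \ s.1
      (s.1 ∪ Δ, ⋃ r ∈ P, (r.evalDelta (I \ s.1) Δ ∩ ((I \ s.1) \ Δ)))

lemma matSeq_mono (P : Set Rule) (E : Set Fact) {m n : ℕ} (h : m ≤ n) :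
    matSeq P E m ⊆ matSeq P E n := by
  induction n with
  | zero => simp_all
  | succ n ih =>
    rcases Nat.lt_or_ge m (n+1) with h' | h'
    · exact (ih (Nat.lt_succ_iff.mp h')).trans (by exact Set.subset_union_left)
    · have : m = n + 1 := le_antisymm h h'
      subst this; exact subset_rfl

lemma matSeq_subset_mat (P : Set Rule) (E : Set Fact) (n : ℕ) :
    matSeq P E n ⊆ mat P E := Set.subset_iUnion _ n

lemma exists_stage (P : Set Rule) (E : Set Fact) (σ : ℕ → ℕ) (s : Finset Atom)
    (h : ∀ B ∈ s, B.subst σ ∈ mat P E) :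
    ∃ m, ∀ B ∈ s, B.subst σ ∈ matSeq P E m := by
  classical
  induction s using Finset.induction with
  | empty => exact ⟨0, by simp⟩
  | @insert A s hA ih =>
    obtain ⟨m, hm⟩ := ih (fun B hB => h B (Finset.mem_insert_of_mem hB))
    obtain ⟨m', hm'⟩ := h A (Finset.mem_insert_self A s)
    obtain ⟨n, rfl⟩ := hm'.1
    refine ⟨max n m, fun B hB => ?_⟩
    rcases Finset.mem_insert.mp hB with rfl | hB
    · exact matSeq_mono P E (le_max_left _ _) hm'.2
    · exact matSeq_mono P E (le_max_right _ _) (hm B hB)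

lemma mat_closed (P : Set Rule) (E : Set Fact) {r : Rule} (hr : r ∈ P) {f : Fact}
    (hf : f ∈ r.eval (mat P E)) : f ∈ mat P E := by
  obtain ⟨σ, hbody, rfl⟩ := hf
  obtain ⟨m, hm⟩ := exists_stage P E σ r.body hbody
  apply matSeq_subset_mat P E (m+1)
  refine Set.mem_union_right _ ?_
  exact Set.mem_biUnion hr ⟨σ, hm, rfl⟩

lemma delSeq_fst_mono (P : Set Rule) (I Em : Set Fact) {j k : ℕ} (h : j ≤ k) :
    (delSeq P I Em j).1 ⊆ (delSeq P I Em k).1 := by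
  induction k with
  | zero => simp_all
  | succ k ih =>
    rcases Nat.lt_or_ge j (k+1) with h' | h'
    · refine (ih (Nat.lt_succ_iff.mp h')).trans ?_
      show (delSeq P I Em k).1 ⊆ (delSeq P I Em (k+1)).1
      simp only [delSeq]
      exact Set.subset_union_left
    · have : j = k + 1 := le_antisymm h h'
      subst this; exact subset_rfl

lemma delSeq_snd_subset (P : Set Rule) (I Em : Set Fact) (k : ℕ) :
    (delSeq P I Em k).2 ⊆ (delSeq P I Em (k+1)).1 := by
  intro f hf
  show f ∈ (delSeq P I Em k).1 ∪ ((delSeq P I Em k).2 \ (delSeq P I Em k).1)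
  by_cases h : f ∈ (delSeq P I Em k).1
  · exact Or.inl h
  · exact Or.inr ⟨hf, h⟩

/-- completeness of overdeletion:
`mat(Π, E) \ mat(Π, E \ E⁻′) ⊆ D`; equivalently `I \ D ⊆ mat(Π, E \ E⁻′)`. -/
theorem overdeletion_complete (P : Set Rule) (hP : P.Finite)
    (hne : ∀ r ∈ P, r.body.Nonempty)
    (E Em I : Set Fact) (hI : I = mat P E) (hEm : Em ⊆ E)
    (D : Set Fact) (hD : D = ⋃ k, (delSeq P I Em k).1) :
    mat P E \ mat P (E \ Em) ⊆ D ∧ I \ D ⊆ mat P (E \ Em) := by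
  classical
  set Dk : ℕ → Set Fact := fun k => (delSeq P I Em k).1 with hDk
  have hnD : ∀ f, f ∉ D → ∀ k, f ∉ Dk k := by
    intro f hf k hk
    exact hf (hD ▸ Set.mem_iUnion.mpr ⟨k, hk⟩)
  -- main claim: every fact in matSeq P E n not in D survives
  have main : ∀ n, ∀ f ∈ matSeq P E n, f ∉ D → f ∈ mat P (E \ Em) := by
    intro n
    induction n with
    | zero =>
      intro f hf hfD
      have h1 : Dk 1 = Em := by
        show (delSeq P I Em 1).1 = Em
        simp [delSeq]
      have : f ∉ Em := by
        intro h; exact hnD f hfD 1 (h1 ▸ h)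
      exact matSeq_subset_mat P (E \ Em) 0 ⟨hf, this⟩
    | succ n ih =>
      intro f hf hfD
      rcases hf with hf | hf
      · exact ih f hf hfD
      · obtain ⟨r, hr, hfr⟩ := Set.mem_iUnion₂.mp hf
        obtain ⟨σ, hbody, rfl⟩ := hfr
        by_cases hcase : ∃ B ∈ r.body, B.subst σ ∈ D
        · -- some body fact deleted: derive contradiction with f ∉ D
          exfalso
          have hI' : ∀ B ∈ r.body, B.subst σ ∈ I := by
            intro B hB
            exact hI ▸ matSeq_subset_mat P E n (hbody B hB)
          -- minimal k with some body fact in Dk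
          have hex : ∃ k, ∃ B ∈ r.body, B.subst σ ∈ Dk k := by
            obtain ⟨B, hB, hBD⟩ := hcase
            rw [hD] at hBD
            obtain ⟨k, hk⟩ := Set.mem_iUnion.mp hBD
            exact ⟨k, B, hB, hk⟩
          let k := Nat.find hex
          have hk : ∃ B ∈ r.body, B.subst σ ∈ Dk k := Nat.find_spec hex
          have hk0 : k ≠ 0 := by
            intro h
            obtain ⟨B, hB, hBD⟩ := hk
            rw [h] at hBD
            simp [hDk, delSeq] at hBD
          obtain ⟨j, hj⟩ : ∃ j, k = j + 1 := ⟨k - 1, (Nat.succ_pred_eq_of_ne_zero hk0).symm⟩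
          have hmin : ∀ B ∈ r.body, B.subst σ ∉ Dk j := by
            intro B hB hBD
            have hjk : j < k := hj ▸ Nat.lt_succ_self j
            exact Nat.find_min hex hjk ⟨B, hB, hBD⟩
          -- body facts in I \ Dk j, one in Δ_j
          set Δ : Set Fact := (delSeq P I Em j).2 \ Dk j with hΔ
          have hdelta : ∃ B ∈ r.body, B.subst σ ∈ Δ := by
            obtain ⟨B, hB, hBD⟩ := hk
            rw [hj] at hBD
            have : B.subst σ ∈ Dk j ∪ Δ := hBD
            rcases this with h | h
            · exact absurd h (hmin B hB)
            · exact ⟨B, hB, h⟩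
          have hfN : r.head.subst σ ∈ (delSeq P I Em (j+1)).2 := by
            show r.head.subst σ ∈ ⋃ r ∈ P, (r.evalDelta (I \ Dk j) Δ ∩ ((I \ Dk j) \ Δ))
            refine Set.mem_biUnion hr ⟨⟨σ, fun B hB => ⟨hI' B hB, hmin B hB⟩, hdelta, rfl⟩, ?_⟩
            have hfI : r.head.subst σ ∈ I := by
              refine hI ▸ matSeq_subset_mat P E (n+1) ?_
              exact Set.mem_union_right _ (Set.mem_biUnion hr ⟨σ, hbody, rfl⟩)
            have hfDj : r.head.subst σ ∉ Dk j := hnD _ hfD j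
            have hfΔ : r.head.subst σ ∉ Δ := by
              intro h
              have : r.head.subst σ ∈ Dk (j+1) := delSeq_fst_mono P I Em (le_refl _) |>.trans subset_rfl <| by
                show r.head.subst σ ∈ (delSeq P I Em (j+1)).1
                show r.head.subst σ ∈ Dk j ∪ Δ
                exact Or.inr h
              exact hnD _ hfD (j+1) this
            exact ⟨⟨hfI, hfDj⟩, hfΔ⟩
          have : r.head.subst σ ∈ Dk (j+2) := delSeq_snd_subset P I Em (j+1) hfN
          exact hnD _ hfD (j+2) this
        · -- no body fact deleted: all survive, so head survives
          push_neg at hcase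
          have hsurv : ∀ B ∈ r.body, B.subst σ ∈ mat P (E \ Em) := by
            intro B hB
            exact ih (B.subst σ) (hbody B hB) (hcase B hB)
          exact mat_closed P (E \ Em) hr ⟨σ, hsurv, rfl⟩
  constructor
  · intro f hf
    by_contra hfD
    obtain ⟨n, hn⟩ := Set.mem_iUnion.mp hf.1
    exact hf.2 (main n f hn hfD)
  · intro f hf
    obtain ⟨n, hn⟩ := Set.mem_iUnion.mp (hI ▸ hf.1)
    exact main n f hn hf.2

end Datalog
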